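/- arXiv:2111.08824 — 2 statements merged into one kernel-verified Lean document; each statement's English description precedes it below -/
import Mathlib

section
/- Let m and s₀ be real numbers, and let T : ℕ → ℝ satisfy T(0) = s₀ and, for every k ≥ 1, T(k) = m^k + 2·m·T(k−1). Then for every natural number k, T(k) = m^k·(2^k − 1) + (2·m)^k·s₀. -/
theorem recurrence_closed_form_of_succ {R : Type*} [CommRing R] (m s₀ : R) (T : ℕ → R)
    (h0 : T 0 = s₀) (hsucc : ∀ k, T (k + 1) = m ^ (k + 1) + 2 * m * T k) (k : ℕ) :
    T k = m ^ k * (2 ^ k - 1) + (2 * m) ^ k * s₀ := by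
  induction k with
  | zero => simp [h0]
  | succ k ih =>
    rw [hsucc, ih]
    ring

/-- Closed-form solution of the request-buffer recurrence `T(k) = m^k + 2·m·T(k−1)`
with base value `T(0) = s₀` (Proposition 1, reparametrized at `n = m^k`). -/
theorem rmi_buffer_recurrence_closed_form (m s₀ : ℝ) (T : ℕ → ℝ)
    (hT0 : T 0 = s₀)
    (hTrec : ∀ k : ℕ, 1 ≤ k → T k = m ^ k + 2 * m * T (k - 1)) :
    ∀ k : ℕ, T k = m ^ k * (2 ^ k - 1) + (2 * m) ^ k * s₀ :=
  recurrence_closed_form_of_succ m s₀ T hT0 fun k => hTrec (k + 1) (Nat.le_add_left 1 k)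
end

section
/- Let μ be a probability measure on ℝ whose cumulative distribution function cdf(μ) is continuous. Then the pushforward measure of μ under the map x ↦ cdf(μ)(x) is the uniform distribution on the unit interval, i.e., it equals Lebesgue measure restricted to [0, 1]. -/
open MeasureTheory ProbabilityTheory

/-! For `0 < t < 1` the intermediate value theorem gives `x` with `cdf μ x = t`, so
`μ {cdf μ ≤ t} ≥ μ (Iic x) = t`. Conversely, by continuity `{cdf μ ≤ t}` is closed, and it is
bounded above since `cdf μ → 1`; so it contains its supremum `a` and lies in `Iic a`, whence
`μ {cdf μ ≤ t} ≤ cdf μ a ≤ t`. Thus the pushforward and the uniform distribution agree on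
every `Iic t`. -/

namespace ProbabilityTheory

variable (μ : Measure ℝ)

lemma mem_range_cdf_of_continuous (hcont : Continuous fun x => cdf μ x) {t : ℝ}
    (ht : t ∈ Set.Ioo 0 1) : t ∈ Set.range fun x => cdf μ x :=
  mem_range_of_exists_le_of_exists_ge hcont
    ((tendsto_cdf_atBot μ).eventually (eventually_le_nhds ht.1)).exists
    ((tendsto_cdf_atTop μ).eventually (eventually_ge_nhds ht.2)).exists

lemma bddAbove_setOf_cdf_le {t : ℝ} (ht : t < 1) : BddAbove {x | cdf μ x ≤ t} := by
  obtain ⟨b, hb⟩ :=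
    ((tendsto_cdf_atTop μ).eventually (eventually_gt_nhds ht)).exists_forall_of_atTop
  exact ⟨b, fun x hx => le_of_not_ge fun hbx => (hb x hbx).not_ge hx⟩

lemma measure_cdf_le_le_ofReal [IsProbabilityMeasure μ] (hcont : Continuous fun x => cdf μ x)
    {t : ℝ} (ht : t < 1) :
    μ {x | cdf μ x ≤ t} ≤ ENNReal.ofReal t := by
  set S := {x | cdf μ x ≤ t}
  rcases S.eq_empty_or_nonempty with hS | hS
  · simp [hS]
  have hbdd := bddAbove_setOf_cdf_le μ ht
  have hsup : sSup S ∈ S := (isClosed_le hcont continuous_const).csSup_mem hS hbdd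
  calc μ S ≤ μ (Set.Iic (sSup S)) := measure_mono fun x hx => le_csSup hbdd hx
    _ = ENNReal.ofReal (cdf μ (sSup S)) := (ofReal_cdf μ _).symm
    _ ≤ ENNReal.ofReal t := ENNReal.ofReal_le_ofReal hsup

lemma ofReal_le_measure_cdf_le [IsProbabilityMeasure μ] (hcont : Continuous fun x => cdf μ x)
    {t : ℝ} (ht : t < 1) :
    ENNReal.ofReal t ≤ μ {x | cdf μ x ≤ t} := by
  rcases le_or_gt t 0 with ht₀ | ht₀
  · simp [ENNReal.ofReal_of_nonpos ht₀]
  obtain ⟨x, hx : cdf μ x = t⟩ := mem_range_cdf_of_continuous μ hcont ⟨ht₀, ht⟩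
  calc ENNReal.ofReal t = μ (Set.Iic x) := by rw [← ofReal_cdf, hx]
    _ ≤ μ {x | cdf μ x ≤ t} := measure_mono fun y hy => (monotone_cdf μ hy).trans hx.le

lemma measure_cdf_le [IsProbabilityMeasure μ] (hcont : Continuous fun x => cdf μ x) (t : ℝ) :
    μ {x | cdf μ x ≤ t} = ENNReal.ofReal (min t 1) := by
  rcases lt_or_ge t 1 with ht | ht
  · rw [min_eq_left ht.le]
    exact (measure_cdf_le_le_ofReal μ hcont ht).antisymm (ofReal_le_measure_cdf_le μ hcont ht)
  · have : {x | cdf μ x ≤ t} = Set.univ :=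
      Set.eq_univ_of_forall fun x => (cdf_le_one μ x).trans ht
    simp [this, min_eq_right ht]

end ProbabilityTheory

lemma Real.volume_Iic_inter_Icc_zero_one (t : ℝ) :
    volume (Set.Iic t ∩ Set.Icc 0 1) = ENNReal.ofReal (min t 1) := by
  have : Set.Iic t ∩ Set.Icc 0 1 = Set.Icc 0 (min t 1) := by
    ext x
    simp only [Set.mem_inter_iff, Set.mem_Iic, Set.mem_Icc, le_min_iff]
    tauto
  rw [this, Real.volume_Icc, sub_zero]

/-- If the CDF of a probability measure `μ` on ℝ is continuous, then pushing `μ`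
forward along its CDF yields the uniform distribution on the unit interval. -/
theorem cdf_pushforward_uniform (μ : Measure ℝ) [IsProbabilityMeasure μ]
    (hcont : Continuous fun x => cdf μ x) :
    μ.map (fun x => cdf μ x) = volume.restrict (Set.Icc (0 : ℝ) 1) := by
  refine Measure.ext_of_Iic _ _ fun t => ?_
  rw [Measure.map_apply hcont.measurable measurableSet_Iic,
    Measure.restrict_apply measurableSet_Iic, Real.volume_Iic_inter_Icc_zero_one]
  exact measure_cdf_le μ hcont t
end
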